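/- P(π/3) > 0, where P(α) = Im( conj(p₁(e^{iα})) · p₂(e^{iα}) ) is evaluated at α = π/3, i.e. at the hexagonal modulus τ = e^{iπ/3}. -/

import Mathlib

open Complex Filter Topology

/-- The lattice point `ω = m + n·τ` associated to `p = (m, n) ∈ ℤ²`. -/
noncomputable def latticePt (τ : ℂ) (p : ℤ × ℤ) : ℂ := (p.1 : ℂ) + (p.2 : ℂ) * τ

/-- The Eisenstein invariant `g₂(τ) = 60·Σ ω⁻⁴`. -/
noncomputable def g2 (τ : ℂ) : ℂ :=
  60 * ∑' p : {p : ℤ × ℤ // p ≠ 0}, (latticePt τ p.1) ^ (-4 : ℤ)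

/-- The Eisenstein invariant `g₃(τ) = 140·Σ ω⁻⁶`. -/
noncomputable def g3 (τ : ℂ) : ℂ :=
  140 * ∑' p : {p : ℤ × ℤ // p ≠ 0}, (latticePt τ p.1) ^ (-6 : ℤ)

/-- The Weierstrass zeta function of the lattice `ℤ + τℤ`. -/
noncomputable def wZeta (τ z : ℂ) : ℂ :=
  z⁻¹ + ∑' p : {p : ℤ × ℤ // p ≠ 0},
    ((z - latticePt τ p.1)⁻¹ + (latticePt τ p.1)⁻¹ + z * (latticePt τ p.1) ^ (-2 : ℤ))

/-- The quasi-period `η₁(τ) = 2·ζ_τ(1/2)`. -/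
noncomputable def eta1 (τ : ℂ) : ℂ := 2 * wZeta τ (1 / 2)

/-- The quasi-period `η₂(τ) = 2·ζ_τ(τ/2)`. -/
noncomputable def eta2 (τ : ℂ) : ℂ := 2 * wZeta τ (τ / 2)

/-- `p₁(τ) = 2·g₂(τ)·η₁(τ) − 3·g₃(τ)`. -/
noncomputable def p1 (τ : ℂ) : ℂ := 2 * g2 τ * eta1 τ - 3 * g3 τ

/-- `p₂(τ) = 2·g₂(τ)·η₂(τ) − 3·g₃(τ)·τ`. -/
noncomputable def p2 (τ : ℂ) : ℂ := 2 * g2 τ * eta2 τ - 3 * g3 τ * τ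

/-- The period function `P(α) = Im( conj(p₁(e^{iα}))·p₂(e^{iα}) )`. -/
noncomputable def Pfun (α : ℝ) : ℝ :=
  ((starRingEnd ℂ) (p1 (Complex.exp (α * Complex.I))) *
    p2 (Complex.exp (α * Complex.I))).im

/-! ### Auxiliary development: the hexagonal modulus `τ₀ = e^{iπ/3}` -/

/-- The hexagonal modulus `τ₀ = e^{iπ/3}`. -/
noncomputable def tau0 : ℂ := Complex.exp ((Real.pi / 3 : ℝ) * Complex.I)

lemma tau0_eq : tau0 = (1/2 : ℝ) + (Real.sqrt 3 / 2 : ℝ) * I := by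
  rw [tau0, Complex.exp_mul_I]
  rw [← Complex.ofReal_cos, ← Complex.ofReal_sin, Real.cos_pi_div_three, Real.sin_pi_div_three]

lemma tau0_im : tau0.im = Real.sqrt 3 / 2 := by
  rw [tau0_eq]; simp

lemma sqrt3_sq : (Real.sqrt 3 : ℂ) ^ 2 = 3 := by
  rw [← Complex.ofReal_pow, Real.sq_sqrt (by norm_num : (3:ℝ) ≥ 0)]
  norm_num

lemma tau0_sq : tau0 ^ 2 = tau0 - 1 := by
  rw [tau0_eq]
  push_cast
  linear_combination (Complex.I^2/4) * sqrt3_sq + (3/4) * Complex.I_sq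

lemma tau0_cube : tau0 ^ 3 = -1 := by
  linear_combination (tau0 + 1) * tau0_sq

lemma lattice_re (p : ℤ × ℤ) : (latticePt tau0 p).re = p.1 + p.2 * (1/2) := by
  rw [latticePt, tau0_eq]; simp

lemma lattice_im (p : ℤ × ℤ) : (latticePt tau0 p).im = p.2 * (Real.sqrt 3 / 2) := by
  rw [latticePt, tau0_eq]; simp

lemma norm_lattice_sq (p : ℤ × ℤ) :
    ‖latticePt tau0 p‖^2 = ((p.1^2 + p.1*p.2 + p.2^2 : ℤ) : ℝ) := by
  rw [← Complex.normSq_eq_norm_sq, Complex.normSq_apply, lattice_re, lattice_im]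
  have h3 : Real.sqrt 3 ^ 2 = 3 := Real.sq_sqrt (by norm_num)
  push_cast
  nlinarith [h3]

/-- The summand of the `g₃` Eisenstein series at the hexagonal modulus. -/
noncomputable def f6 (p : ℤ × ℤ) : ℂ := (latticePt tau0 p) ^ (-6 : ℤ)

lemma norm_f6 (p : ℤ × ℤ) :
    ‖f6 p‖ = (((p.1^2 + p.1*p.2 + p.2^2 : ℤ) : ℝ)^3)⁻¹ := by
  rw [f6, norm_zpow, show (-6:ℤ) = -(6:ℕ) by norm_num, zpow_neg, zpow_natCast]
  congr 1
  rw [show (6:ℕ) = 2*3 by norm_num, pow_mul, norm_lattice_sq]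

/-- A summable majorant profile on `ℤ`. -/
noncomputable def v (m : ℤ) : ℝ := if m = 0 then 5/32 else ((m:ℝ)^2)⁻¹

lemma v_nonneg (m : ℤ) : 0 ≤ v m := by
  unfold v; split <;> positivity

lemma v_hasSum : HasSum v (Real.pi^2/3 + 5/32) := by
  have h1 : HasSum (fun n : ℕ => (((n:ℝ))^2)⁻¹) (Real.pi^2/6) := by
    simpa [one_div] using hasSum_zeta_two
  have h2 : HasSum (fun n : ℕ => ((((n:ℝ))+1)^2)⁻¹) (Real.pi^2/6) := by
    have := (hasSum_nat_add_iff' (f := fun n : ℕ => (((n:ℝ))^2)⁻¹) 1).mpr h1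
    simpa using this
  have hz : HasSum (fun m : ℤ => (((m:ℝ))^2)⁻¹) (Real.pi^2/6 + Real.pi^2/6) := by
    refine HasSum.of_nat_of_neg_add_one (by exact_mod_cast h1) ?_
    convert h2 using 2 with n
    push_cast
    ring
  have hind : HasSum (fun m : ℤ => if m = 0 then (5/32:ℝ) else 0) (5/32) :=
    hasSum_ite_eq 0 (5/32)
  have heq : v = (fun m : ℤ => (((m:ℝ))^2)⁻¹ + if m = 0 then (5/32:ℝ) else 0) := by
    funext m
    by_cases hm : m = 0 <;> simp [v, hm]
  rw [heq]
  convert hz.add hind using 1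
  ring

lemma one_le_sq {k : ℤ} (h : k ≠ 0) : (1:ℝ) ≤ (k:ℝ)^2 := by
  have : 1 ≤ k^2 := by rcases h.lt_or_gt with h | h <;> nlinarith
  exact_mod_cast this

lemma four_le_sq {k : ℤ} (h : ¬(k = -1 ∨ k = 0 ∨ k = 1)) : (4:ℝ) ≤ (k:ℝ)^2 := by
  push_neg at h
  have : 4 ≤ k^2 := by
    rcases (by omega : k ≤ -2 ∨ 2 ≤ k) with h | h <;> nlinarith
  exact_mod_cast this

/-- The nine central lattice sites. -/
def F9 : Finset (ℤ×ℤ) := ({-1,0,1} : Finset ℤ) ×ˢ ({-1,0,1} : Finset ℤ)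

lemma bound_outside {p : ℤ×ℤ} (hp : p ∉ F9) : ‖f6 p‖ ≤ 2/5 * (v p.1 * v p.2) := by
  obtain ⟨m, n⟩ := p
  rw [norm_f6]
  have hmem : ¬(m = -1 ∨ m = 0 ∨ m = 1) ∨ ¬(n = -1 ∨ n = 0 ∨ n = 1) := by
    by_contra h
    push_neg at h
    apply hp
    simp only [F9, Finset.mem_product, Finset.mem_insert, Finset.mem_singleton]
    tauto
  push_cast
  by_cases hm : m = 0
  · have hn4 : (4:ℝ) ≤ (n:ℝ)^2 := by
      apply four_le_sq; rcases hmem with h | h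
      · exact absurd (Or.inr (Or.inl hm)) h
      · exact h
    have hn0 : n ≠ 0 := by rintro rfl; norm_num at hn4
    have hvm : v m = 5/32 := by simp [v, hm]
    have hvn : v n = (((n:ℝ))^2)⁻¹ := by simp [v, hn0]
    rw [hvm, hvn, hm]
    push_cast
    rw [inv_eq_one_div, div_le_iff₀ (by nlinarith [pow_pos (show (0:ℝ) < (n:ℝ)^2 by nlinarith) 3])]
    have hne : ((n:ℝ))^2 ≠ 0 := by positivity
    have e : 2/5 * (5/32 * (((n:ℝ))^2)⁻¹) * (((0:ℝ))^2 + 0 * n + (n:ℝ)^2)^3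
        = (n:ℝ)^4/16 := by field_simp; ring
    rw [e]
    nlinarith [hn4]
  · by_cases hn : n = 0
    · have hm4 : (4:ℝ) ≤ (m:ℝ)^2 := by
        apply four_le_sq; rcases hmem with h | h
        · exact h
        · exact absurd (Or.inr (Or.inl hn)) h
      have hvn : v n = 5/32 := by simp [v, hn]
      have hvm : v m = (((m:ℝ))^2)⁻¹ := by simp [v, hm]
      rw [hvm, hvn, hn]
      push_cast
      rw [inv_eq_one_div, div_le_iff₀ (by nlinarith [pow_pos (show (0:ℝ) < (m:ℝ)^2 by nlinarith) 3])]
      have e : 2/5 * ((((m:ℝ))^2)⁻¹ * (5/32)) * (((m:ℝ))^2 + (m:ℝ) * 0 + ((0:ℝ))^2)^3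
          = (m:ℝ)^4/16 := by field_simp; ring
      rw [e]
      nlinarith [hm4]
    · -- both coordinates nonzero
      have hvm : v m = (((m:ℝ))^2)⁻¹ := by simp [v, hm]
      have hvn : v n = (((n:ℝ))^2)⁻¹ := by simp [v, hn]
      set x : ℝ := (m:ℝ)
      set y : ℝ := (n:ℝ)
      have hx1 : (1:ℝ) ≤ x^2 := one_le_sq hm
      have hy1 : (1:ℝ) ≤ y^2 := one_le_sq hn
      have h5 : (5:ℝ) ≤ x^2 + y^2 := by
        rcases hmem with h | h
        · have := four_le_sq h; linarith
        · have := four_le_sq h; linarith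
      set a : ℝ := x^2 + x*y + y^2 with ha
      have h2a : x^2 + y^2 ≤ 2*a := by nlinarith [sq_nonneg (x+y)]
      have hapos : 0 < a := by nlinarith
      have hcube : (x^2+y^2)^3 ≤ (2*a)^3 :=
        pow_le_pow_left₀ (by positivity) h2a 3
      have h4 : 4*x^2*y^2 ≤ (x^2+y^2)^2 := by nlinarith [sq_nonneg (x^2-y^2)]
      have h6 : (x^2+y^2)*(4*x^2*y^2) ≤ (x^2+y^2)^3 := by nlinarith [h4, sq_nonneg x, sq_nonneg y]
      have h7 : 5*(4*x^2*y^2) ≤ (x^2+y^2)*(4*x^2*y^2) :=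
        mul_le_mul_of_nonneg_right h5 (by positivity)
      have key : 5 * (x^2*y^2) ≤ 2 * a^3 := by nlinarith [hcube, h6, h7]
      rw [hvm, hvn]
      rw [inv_eq_one_div, div_le_iff₀ (by positivity)]
      have e : 2/5 * ((x^2)⁻¹ * (y^2)⁻¹) * a^3 = (2*a^3)/(5*(x^2*y^2)) := by
        field_simp
        try ring
      rw [e, le_div_iff₀ (by positivity)]
      linarith [key]

/-- The global majorant for the tail of the `g₃` series. -/
noncomputable def W (p : ℤ×ℤ) : ℝ := 2/5 * (v p.1 * v p.2)

lemma W_summable : Summable W :=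
  ((v_hasSum.summable.mul_of_nonneg v_hasSum.summable v_nonneg v_nonneg)).mul_left (2/5)

lemma W_nonneg (p : ℤ×ℤ) : 0 ≤ W p := by
  have := v_nonneg p.1; have := v_nonneg p.2
  unfold W; positivity

lemma W_tsum_le : ∑' p : ℤ×ℤ, W p ≤ 13689/2560 := by
  have hA : ∑' m : ℤ, v m = Real.pi^2/3 + 5/32 := v_hasSum.tsum_eq
  have hprod : Summable (fun p : ℤ×ℤ => v p.1 * v p.2) :=
    v_hasSum.summable.mul_of_nonneg v_hasSum.summable v_nonneg v_nonneg
  have h1 : ∑' p : ℤ×ℤ, W p = 2/5 * ∑' p : ℤ×ℤ, (v p.1 * v p.2) := by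
    simp only [W]; exact tsum_mul_left
  have h2 : ∑' p : ℤ×ℤ, (v p.1 * v p.2) = (Real.pi^2/3 + 5/32) * (Real.pi^2/3 + 5/32) := by
    rw [Summable.tsum_prod' hprod (fun m => v_hasSum.summable.mul_left (v m))]
    calc ∑' (m : ℤ), ∑' (n : ℤ), v m * v n
        = ∑' (m : ℤ), v m * (Real.pi^2/3 + 5/32) := by
          congr 1; funext m; rw [tsum_mul_left, hA]
      _ = (Real.pi^2/3 + 5/32) * (Real.pi^2/3 + 5/32) := by
          rw [tsum_mul_right, hA]
  rw [h1, h2]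
  have hpi : Real.pi ≤ 3.15 := Real.pi_lt_d2.le
  have hpi0 : 0 < Real.pi := Real.pi_pos
  have hA2 : Real.pi^2/3 + 5/32 ≤ 3.46375 := by nlinarith
  have hA0 : (0:ℝ) ≤ Real.pi^2/3 + 5/32 := by positivity
  nlinarith [hA2, hA0]

lemma f6_norm_summable_compl : Summable (fun p : {x : ℤ×ℤ // x ∉ F9} => ‖f6 p.1‖) := by
  apply Summable.of_nonneg_of_le (fun _ => norm_nonneg _) (fun p => bound_outside p.2)
  exact (W_summable.subtype _)

lemma f6_summable : Summable f6 :=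
  F9.summable_compl_iff.mp f6_norm_summable_compl.of_norm

lemma tail_bound : ‖∑' p : {x : ℤ×ℤ // x ∉ F9}, f6 p.1‖ ≤ 13689/2560 := by
  refine (norm_tsum_le_tsum_norm f6_norm_summable_compl).trans ?_
  refine le_trans ?_ W_tsum_le
  refine le_trans (Summable.tsum_le_tsum (fun p => bound_outside p.2) f6_norm_summable_compl
    (W_summable.subtype _)) ?_
  exact Summable.tsum_subtype_le W _ W_nonneg W_summable

lemma f6_eval (a b : ℤ) (w : ℂ) (h : ((a:ℂ)+(b:ℂ)*tau0)^6 = w) : f6 (a,b) = w⁻¹ := by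
  rw [f6, latticePt, show (-6:ℤ) = -(6:ℕ) by norm_num, zpow_neg, zpow_natCast]
  exact congrArg _ h

lemma sum_F9 : ∑ p ∈ F9, f6 p = 160/27 := by
  have e1 : f6 (1,1) = (-27 : ℂ)⁻¹ := f6_eval 1 1 _ (by
    push_cast
    linear_combination (tau0^4+7*tau0^3+21*tau0^2+34*tau0+28) * tau0_sq)
  have e2 : f6 (-1,-1) = (-27 : ℂ)⁻¹ := f6_eval (-1) (-1) _ (by
    push_cast
    linear_combination (tau0^4+7*tau0^3+21*tau0^2+34*tau0+28) * tau0_sq)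
  have e3 : f6 (1,-1) = (1 : ℂ)⁻¹ := f6_eval 1 (-1) _ (by
    push_cast
    linear_combination ((1-tau0)^4+(1-tau0)^3-(1-tau0)-1) * tau0_sq)
  have e4 : f6 (-1,1) = (1 : ℂ)⁻¹ := f6_eval (-1) 1 _ (by
    push_cast
    linear_combination ((1-tau0)^4+(1-tau0)^3-(1-tau0)-1) * tau0_sq)
  have e5 : f6 (0,1) = (1 : ℂ)⁻¹ := f6_eval 0 1 _ (by
    push_cast
    linear_combination (tau0^4+tau0^3-tau0-1) * tau0_sq)
  have e6 : f6 (0,-1) = (1 : ℂ)⁻¹ := f6_eval 0 (-1) _ (by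
    push_cast
    linear_combination (tau0^4+tau0^3-tau0-1) * tau0_sq)
  have e7 : f6 (1,0) = (1 : ℂ)⁻¹ := f6_eval 1 0 _ (by push_cast; ring)
  have e8 : f6 (-1,0) = (1 : ℂ)⁻¹ := f6_eval (-1) 0 _ (by push_cast; ring)
  have e9 : f6 (0,0) = (0 : ℂ) := by
    rw [f6, latticePt]
    norm_num
  have expand : ∑ p ∈ F9, f6 p =
      f6 (-1,-1) + f6 (-1,0) + f6 (-1,1) + (f6 (0,-1) + f6 (0,0) + f6 (0,1))
        + (f6 (1,-1) + f6 (1,0) + f6 (1,1)) := by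
    rw [F9, Finset.sum_product]
    simp [Finset.sum_insert, Finset.mem_insert]
    ring
  rw [expand, e1, e2, e3, e4, e5, e6, e7, e8, e9]
  norm_num

lemma S6_ne_zero : ∑' p : ℤ×ℤ, f6 p ≠ 0 := by
  have hsplit := Summable.sum_add_tsum_compl (s := F9) f6_summable
  rw [sum_F9] at hsplit
  intro h
  rw [h] at hsplit
  have hnorm : ‖∑' p : {x : ℤ×ℤ // x ∉ F9}, f6 p.1‖ = 160/27 := by
    have h' : ∑' (x : ↑(↑F9 : Set (ℤ×ℤ))ᶜ), f6 ↑x = -(160/27 : ℂ) := by linear_combination hsplit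
    rw [show (∑' p : {x : ℤ×ℤ // x ∉ F9}, f6 p.1) = ∑' (x : ↑(↑F9 : Set (ℤ×ℤ))ᶜ), f6 ↑x from rfl,
      h', norm_neg]
    rw [show ((160/27 : ℂ)) = ((160/27 : ℝ) : ℂ) by norm_num, Complex.norm_real]
    norm_num
  have h2 := tail_bound
  rw [hnorm] at h2
  norm_num at h2

/-- Multiplication by `τ₀` acts on the lattice `ℤ + τ₀ℤ` as this linear automorphism of `ℤ²`. -/
def sigma0 : ℤ×ℤ ≃ ℤ×ℤ where
  toFun p := (-p.2, p.1+p.2)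
  invFun p := (p.1+p.2, -p.1)
  left_inv p := by ext <;> simp
  right_inv p := by ext <;> simp

lemma sigma0_zero_iff (p : ℤ×ℤ) : sigma0 p = 0 ↔ p = 0 := by
  constructor <;> intro h
  · have h1 := congrArg Prod.fst h
    have h2 := congrArg Prod.snd h
    simp [sigma0] at h1 h2
    ext <;> simp <;> omega
  · rw [h]; rfl

lemma lattice_sigma0 (p : ℤ×ℤ) : latticePt tau0 (sigma0 p) = tau0 * latticePt tau0 p := by
  simp only [latticePt, sigma0, Equiv.coe_fn_mk]
  push_cast
  linear_combination (-(p.2 : ℂ)) * tau0_sq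

/-- `sigma0` restricted to nonzero lattice sites. -/
noncomputable def e0 : {p : ℤ×ℤ // p ≠ 0} ≃ {p : ℤ×ℤ // p ≠ 0} :=
  Equiv.subtypeEquiv sigma0 (fun p => not_congr (sigma0_zero_iff p).symm)

lemma g2_tau0 : g2 tau0 = 0 := by
  rw [g2]
  set S := ∑' p : {p : ℤ × ℤ // p ≠ 0}, (latticePt tau0 p.1) ^ (-4 : ℤ) with hS
  have h := e0.tsum_eq (fun p : {p : ℤ×ℤ // p ≠ 0} => (latticePt tau0 p.1) ^ (-4:ℤ))
  have h2 : ∀ c : {p : ℤ×ℤ // p ≠ 0}, (latticePt tau0 ((e0 c) : ℤ×ℤ)) ^ (-4:ℤ)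
      = tau0^(-4:ℤ) * (latticePt tau0 (c : ℤ×ℤ))^(-4:ℤ) := by
    intro c
    rw [show ((e0 c) : ℤ×ℤ) = sigma0 (c : ℤ×ℤ) from rfl, lattice_sigma0, mul_zpow]
  simp only [h2] at h
  rw [tsum_mul_left, ← hS] at h
  have hfac : (tau0^(-4:ℤ) - 1) * S = 0 := by linear_combination h
  rcases mul_eq_zero.mp hfac with hc | hc
  · exfalso
    have hc' : tau0^(-4:ℤ) = 1 := by linear_combination hc
    rw [show (-4:ℤ) = -(4:ℕ) by norm_num, zpow_neg, zpow_natCast, inv_eq_one] at hc'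
    have h4 : tau0^4 = -tau0 := by linear_combination tau0 * tau0_cube
    rw [h4] at hc'
    have hτ : tau0 = -1 := by linear_combination -hc'
    have him := congrArg Complex.im hτ
    rw [tau0_im] at him
    simp only [Complex.neg_im, Complex.one_im, neg_zero] at him
    have h3 : (0:ℝ) < Real.sqrt 3 := Real.sqrt_pos.mpr (by norm_num)
    linarith [him]
  · rw [hc, mul_zero]

lemma f6_zero : f6 0 = 0 := by
  have h0 : latticePt tau0 0 = 0 := by simp [latticePt]
  rw [f6, h0]
  exact zero_zpow _ (by norm_num)

lemma g3_tau0 : g3 tau0 = 140 * ∑' p : ℤ×ℤ, f6 p := by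
  have hsupp : Function.support f6 ⊆ {p : ℤ×ℤ | p ≠ 0} := by
    intro p hp
    simp only [Function.mem_support] at hp
    simp only [Set.mem_setOf_eq]
    rintro rfl
    exact hp f6_zero
  rw [g3]
  congr 1
  exact tsum_subtype_eq_of_support_subset hsupp

lemma g3_tau0_ne : g3 tau0 ≠ 0 := by
  rw [g3_tau0]
  exact mul_ne_zero (by norm_num) S6_ne_zero

theorem Pfun_pos_at_pi_div_three : 0 < Pfun (Real.pi / 3) := by
  show 0 < ((starRingEnd ℂ) (p1 tau0) * p2 tau0).im
  have key : (starRingEnd ℂ) (p1 tau0) * p2 tau0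
      = ((9 * Complex.normSq (g3 tau0) : ℝ) : ℂ) * tau0 := by
    rw [p1, p2, g2_tau0]
    calc (starRingEnd ℂ) (2 * 0 * eta1 tau0 - 3 * g3 tau0) *
          (2 * 0 * eta2 tau0 - 3 * g3 tau0 * tau0)
        = (starRingEnd ℂ) (-(3 * g3 tau0)) * (-(3 * g3 tau0 * tau0)) := by ring_nf
      _ = 9 * ((g3 tau0) * (starRingEnd ℂ) (g3 tau0)) * tau0 := by
          rw [map_neg, map_mul]
          simp only [map_ofNat]
          ring
      _ = ((9 * Complex.normSq (g3 tau0) : ℝ) : ℂ) * tau0 := by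
          rw [Complex.mul_conj]
          push_cast
          ring
  rw [key]
  rw [show (((9 * Complex.normSq (g3 tau0) : ℝ) : ℂ) * tau0).im
      = (9 * Complex.normSq (g3 tau0)) * tau0.im by
    rw [Complex.mul_im]; simp]
  rw [tau0_im]
  have h1 : 0 < Complex.normSq (g3 tau0) := Complex.normSq_pos.mpr g3_tau0_ne
  have h2 : (0:ℝ) < Real.sqrt 3 := Real.sqrt_pos.mpr (by norm_num)
  positivity
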